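/- arXiv:1810.04723 — 2 statements merged into one kernel-verified Lean document; each statement's English description precedes it below -/
import Mathlib

section
/- Let μ > 0, L > 0, N > 0 and let (Y_t) satisfy Y_{t+1} ≤ (1 − μη_t)Y_t + η_t²N with η_t = 2/(μt + 4L) ≤ 1/(2L) for all t ≥ 0. Then for all t ≥ T' := (4L/μ)max{LμY_0/N, 1} − 4L/μ, Y_t ≤ (16N/μ)·1/(μ(t − T') + 4L). -/
/-! Write `A t = μ t + 4 L`, so that `η t = 2 / A t` and the recursion reads
`A t ^ 2 Y (t+1) ≤ A t (A t - 2 μ) Y t + 4 N`. With `Δ = μ T' = 4 L (max {L μ Y 0 / N, 1} - 1)`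
the potential bound `μ (A t)² Y t ≤ 16 N (A t + Δ)` holds at `t = 0` by the choice of `T'` and
propagates along the recursion; as `(A + Δ)(A - Δ) ≤ A²` it yields `Y t ≤ 16 N / (μ (A t - Δ))`.

While `A t ≥ 2 μ` propagation is a polynomial inequality. Before that the contraction factor
`1 - 2 μ / A t` is negative, and `Y (t+1)` is bounded through the nonnegativity of its neighbours:
`Y t ≥ 0` gives `(A t)² Y (t+1) ≤ 4 N`, and `Y (t+2) ≥ 0` gives
`A (t+1) (2 μ - A (t+1)) Y (t+1) ≤ 4 N`; together they give `μ A (t+1) Y (t+1) ≤ 16 N`. -/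

section SGDRecursion

variable {μ N A y y' : ℝ}

theorem sq_mul_le_of_sgd_step (hA : 0 < A)
    (h : y' ≤ (1 - μ * (2 / A)) * y + (2 / A) ^ 2 * N) :
    A ^ 2 * y' ≤ A * (A - 2 * μ) * y + 4 * N := by
  have hrhs : (1 - μ * (2 / A)) * y + (2 / A) ^ 2 * N
      = (A * (A - 2 * μ) * y + 4 * N) / A ^ 2 := by
    field_simp
    ring
  rwa [hrhs, le_div_iff₀ (by positivity), mul_comm] at h

theorem sgd_potential_step {Δ : ℝ} (hμ : 0 < μ) (hN : 0 ≤ N) (hΔ : 0 ≤ Δ) (hA : 2 * μ ≤ A)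
    (hstep : A ^ 2 * y' ≤ A * (A - 2 * μ) * y + 4 * N)
    (hy : μ * A ^ 2 * y ≤ 16 * N * (A + Δ)) :
    μ * (A + μ) ^ 2 * y' ≤ 16 * N * (A + μ + Δ) := by
  have hA0 : 0 < A := by linarith
  have hpoly : (A + μ) ^ 2 * (4 * (A - 2 * μ) * (A + Δ) + μ * A) ≤ 4 * (A + μ + Δ) * A ^ 3 := by
    have hdiff : 4 * (A + μ + Δ) * A ^ 3 - (A + μ) ^ 2 * (4 * (A - 2 * μ) * (A + Δ) + μ * A)
        = μ * (3 * A ^ 3 + 10 * μ * A ^ 2 + (12 * Δ + 7 * μ) * μ * A + 8 * Δ * μ ^ 2) := by ring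
    exact sub_nonneg.1 (hdiff ▸ by positivity)
  refine le_of_mul_le_mul_right ?_ (pow_pos hA0 3)
  calc μ * (A + μ) ^ 2 * y' * A ^ 3 = μ * (A + μ) ^ 2 * A * (A ^ 2 * y') := by ring
    _ ≤ μ * (A + μ) ^ 2 * A * (A * (A - 2 * μ) * y + 4 * N) := by gcongr
    _ = (A + μ) ^ 2 * ((A - 2 * μ) * (μ * A ^ 2 * y) + 4 * N * μ * A) := by ring
    _ ≤ (A + μ) ^ 2 * ((A - 2 * μ) * (16 * N * (A + Δ)) + 4 * N * μ * A) := by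
      gcongr
    _ = 4 * N * ((A + μ) ^ 2 * (4 * (A - 2 * μ) * (A + Δ) + μ * A)) := by ring
    _ ≤ 4 * N * (4 * (A + μ + Δ) * A ^ 3) := by gcongr
    _ = 16 * N * (A + μ + Δ) * A ^ 3 := by ring

theorem sq_mul_le_of_sgd_step_of_le (hA0 : 0 ≤ A) (hA : A ≤ 2 * μ) (hy : 0 ≤ y)
    (hstep : A ^ 2 * y' ≤ A * (A - 2 * μ) * y + 4 * N) : A ^ 2 * y' ≤ 4 * N := by
  nlinarith [mul_nonneg (mul_nonneg hA0 (sub_nonneg.2 hA)) hy]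

theorem mul_sub_mul_le_of_sgd_step_of_nonneg (hy' : 0 ≤ y')
    (hstep : A ^ 2 * y' ≤ A * (A - 2 * μ) * y + 4 * N) : A * (2 * μ - A) * y ≤ 4 * N := by
  nlinarith [mul_nonneg (sq_nonneg A) hy']

theorem sgd_bound_of_le_two_mul {y'' : ℝ} (hμ : 0 < μ) (hA0 : 0 < A) (hA : A ≤ 2 * μ)
    (hy : 0 ≤ y) (hy' : 0 ≤ y') (hy'' : 0 ≤ y'')
    (hstep : A ^ 2 * y' ≤ A * (A - 2 * μ) * y + 4 * N)
    (hstep' : (A + μ) ^ 2 * y'' ≤ (A + μ) * (A + μ - 2 * μ) * y' + 4 * N) :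
    μ * (A + μ) * y' ≤ 16 * N := by
  have hfirst := sq_mul_le_of_sgd_step_of_le hA0.le hA hy hstep
  rcases le_total A μ with hAμ | hμA
  · have hsecond := mul_sub_mul_le_of_sgd_step_of_nonneg hy'' hstep'
    have hsum : μ ^ 2 * y' ≤ 8 * N := by
      linarith [show μ ^ 2 * y' = (A + μ) * (2 * μ - (A + μ)) * y' + A ^ 2 * y' by ring]
    nlinarith [mul_nonneg (sub_nonneg.2 hAμ) (mul_nonneg hμ.le hy')]
  · have hcoeff : 0 ≤ (A - μ) * (2 * A + μ) := mul_nonneg (sub_nonneg.2 hμA) (by linarith)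
    nlinarith [mul_nonneg hcoeff hy']

end SGDRecursion

theorem sgd_potential_le {μ N Δ : ℝ} {A Y : ℕ → ℝ} (hμ : 0 < μ) (hN : 0 ≤ N) (hΔ : 0 ≤ Δ)
    (hA : ∀ t, 0 < A t) (hA_succ : ∀ t, A (t + 1) = A t + μ) (hY : ∀ t, 0 ≤ Y t)
    (hstep : ∀ t, A t ^ 2 * Y (t + 1) ≤ A t * (A t - 2 * μ) * Y t + 4 * N)
    (h0 : μ * A 0 ^ 2 * Y 0 ≤ 16 * N * (A 0 + Δ)) :
    ∀ t, μ * A t ^ 2 * Y t ≤ 16 * N * (A t + Δ) := by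
  intro t
  induction t with
  | zero => exact h0
  | succ t ih =>
    rw [hA_succ]
    rcases le_total (2 * μ) (A t) with hlate | hearly
    · exact sgd_potential_step hμ hN hΔ hlate (hstep t) ih
    · have hstep' := hstep (t + 1)
      rw [hA_succ] at hstep'
      have hbound := sgd_bound_of_le_two_mul hμ (hA t) hearly (hY t) (hY (t + 1)) (hY (t + 2))
        (hstep t) hstep'
      calc μ * (A t + μ) ^ 2 * Y (t + 1) = (A t + μ) * (μ * (A t + μ) * Y (t + 1)) := by ring
        _ ≤ (A t + μ) * (16 * N) := by gcongr; linarith [hA t]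
        _ ≤ 16 * N * (A t + μ + Δ) := by nlinarith

theorem le_div_of_potential_le {μ N Δ A y : ℝ} (hμ : 0 < μ) (hN : 0 ≤ N) (hΔ : 0 ≤ Δ)
    (hΔA : Δ < A) (h : μ * A ^ 2 * y ≤ 16 * N * (A + Δ)) :
    y ≤ 16 * N / μ * (1 / (A - Δ)) := by
  have hA : 0 < A := hΔ.trans_lt hΔA
  rw [div_mul_div_comm, mul_one, le_div_iff₀ (mul_pos hμ (sub_pos.2 hΔA))]
  refine le_of_mul_le_mul_right ?_ (pow_pos hA 2)
  calc y * (μ * (A - Δ)) * A ^ 2 = (A - Δ) * (μ * A ^ 2 * y) := by ring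
    _ ≤ (A - Δ) * (16 * N * (A + Δ)) := by gcongr
    _ = 16 * N * A ^ 2 - 16 * N * Δ ^ 2 := by ring
    _ ≤ 16 * N * A ^ 2 := by nlinarith [mul_nonneg hN (sq_nonneg Δ)]

theorem sgd_upper_bound_general (μ L N : ℝ) (hμ : 0 < μ) (hL : 0 < L) (hN : 0 < N)
    (Y : ℕ → ℝ) (hYnonneg : ∀ t, 0 ≤ Y t)
    (η : ℕ → ℝ) (hη : ∀ t : ℕ, η t = 2 / (μ * t + 4 * L))
    (hrec : ∀ t, Y (t + 1) ≤ (1 - μ * η t) * Y t + (η t) ^ 2 * N) :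
    ∀ t : ℕ,
      (4 * L / μ) * max (L * μ * Y 0 / N) 1 - 4 * L / μ ≤ (t : ℝ) →
      Y t ≤ (16 * N / μ) *
        (1 / (μ * ((t : ℝ) - ((4 * L / μ) * max (L * μ * Y 0 / N) 1 - 4 * L / μ))
          + 4 * L)) := by
  intro t ht
  set M := max (L * μ * Y 0 / N) 1
  have hM : 1 ≤ M := le_max_right _ _
  have hY0 : L * μ * Y 0 ≤ N * M := by
    rw [mul_comm N, ← div_le_iff₀ hN]; exact le_max_left _ _
  set Δ := 4 * L * (M - 1) with hΔ
  have hshift : 4 * L / μ * M - 4 * L / μ = Δ / μ := by rw [hΔ]; field_simp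
  have hA : ∀ s : ℕ, 0 < μ * s + 4 * L := fun s => by positivity
  have hbase : μ * (4 * L) ^ 2 * Y 0 ≤ 16 * N * (4 * L + Δ) :=
    calc μ * (4 * L) ^ 2 * Y 0 = 16 * L * (L * μ * Y 0) := by ring
      _ ≤ 16 * L * (N * M) := by gcongr
      _ ≤ 4 * (16 * L * (N * M)) := by
        linarith [mul_pos hL (mul_pos hN (by linarith : (0 : ℝ) < M))]
      _ = 16 * N * (4 * L + Δ) := by rw [hΔ]; ring
  have hpot := sgd_potential_le (A := fun s : ℕ => μ * s + 4 * L) (Δ := Δ) hμ hN.le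
    (by positivity) hA (fun s => by push_cast; ring) hYnonneg
    (fun s => sq_mul_le_of_sgd_step (hA s) (hη s ▸ hrec s))
    (by simpa using hbase) t
  rw [hshift, div_le_iff₀ hμ] at ht
  rw [hshift, mul_sub, mul_div_cancel₀ _ hμ.ne', sub_add_eq_add_sub]
  exact le_div_of_potential_le hμ hN.le (by positivity) (by linarith) hpot

theorem sgd_upper_bound (μ L N : ℝ) (hμ : 0 < μ) (hL : 0 < L) (hN : 0 < N)
    (Y : ℕ → ℝ) (hYnonneg : ∀ t, 0 ≤ Y t)
    (η : ℕ → ℝ) (hη : ∀ t : ℕ, η t = 2 / (μ * t + 4 * L))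
    (hηL : ∀ t, η t ≤ 1 / (2 * L))
    (hrec : ∀ t, Y (t + 1) ≤ (1 - μ * η t) * Y t + (η t) ^ 2 * N) :
    ∀ t : ℕ,
      (4 * L / μ) * max (L * μ * Y 0 / N) 1 - 4 * L / μ ≤ (t : ℝ) →
      Y t ≤ (16 * N / μ) *
        (1 / (μ * ((t : ℝ) - ((4 * L / μ) * max (L * μ * Y 0 / N) 1 - 4 * L / μ))
          + 4 * L)) :=
  sgd_upper_bound_general μ L N hμ hL hN Y hYnonneg η hη hrec
end

section
/- If F: ℝ^d → ℝ is differentiable, μ-strongly convex with minimizer w*, and for all w, E[‖∇f(w;ξ)‖²] ≤ σ² with ∇F(w) = E[∇f(w;ξ)] and σ < ∞, then a contradiction arises: F(w) ≤ σ²/(2μ) + F(w*) for all w, while F(w) ≥ (μ/2)‖w − w*‖² + F(w*), so no such F exists on all of ℝ^d with bounded stochastic gradients. -/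
open MeasureTheory
open scoped RealInnerProductSpace

/-!
Adding the strong convexity inequality at `(w, w')` and at `(w', w)` makes the gradient strongly
monotone, so `μ ‖w - w'‖ ≤ ‖G w - G w'‖`: `G` is antilipschitz, and its range is unbounded because
the space is. Jensen's inequality, however, gives `‖G w‖² = ‖E[g w]‖² ≤ E[‖g w‖²] ≤ σ²`.
-/

theorem sq_norm_integral_le_integral_sq_norm {Ω E : Type*} [MeasurableSpace Ω]
    [NormedAddCommGroup E] [NormedSpace ℝ E] [CompleteSpace E]
    {P : Measure Ω} [IsProbabilityMeasure P] {f : Ω → E} (hf : MemLp f 2 P) :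
    ‖∫ ω, f ω ∂P‖ ^ 2 ≤ ∫ ω, ‖f ω‖ ^ 2 ∂P :=
  (convexOn_univ_norm.pow (fun x _ => norm_nonneg x) 2).map_integral_le
    (continuous_norm.pow 2).continuousOn isClosed_univ (by simp) (hf.integrable one_le_two)
    ((memLp_two_iff_integrable_sq_norm hf.1).1 hf)

section StronglyConvex

variable {E : Type*} [NormedAddCommGroup E] [InnerProductSpace ℝ E] {F : E → ℝ} {G : E → E} {μ : ℝ}

theorem strongMonotone_of_strongConvex
    (hsc : ∀ w w', F w - F w' ≥ ⟪G w', w - w'⟫ + μ / 2 * ‖w - w'‖ ^ 2) (w w' : E) :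
    μ * ‖w - w'‖ ^ 2 ≤ ⟪G w - G w', w - w'⟫ := by
  have h := hsc w' w
  rw [← neg_sub w w', inner_neg_right, norm_neg] at h
  linarith [hsc w w', inner_sub_left (𝕜 := ℝ) (G w) (G w') (w - w')]

theorem mul_norm_sub_le_norm_sub_of_strongConvex
    (hsc : ∀ w w', F w - F w' ≥ ⟪G w', w - w'⟫ + μ / 2 * ‖w - w'‖ ^ 2) (w w' : E) :
    μ * ‖w - w'‖ ≤ ‖G w - G w'‖ := by
  rcases (norm_nonneg (w - w')).eq_or_lt with h | h
  · rw [← h, mul_zero]; exact norm_nonneg _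
  refine le_of_mul_le_mul_right ?_ h
  calc μ * ‖w - w'‖ * ‖w - w'‖ = μ * ‖w - w'‖ ^ 2 := by ring
    _ ≤ ⟪G w - G w', w - w'⟫ := strongMonotone_of_strongConvex hsc w w'
    _ ≤ ‖G w - G w'‖ * ‖w - w'‖ := real_inner_le_norm _ _

theorem not_isBounded_range_of_strongConvex [Nontrivial E] (hμ : 0 < μ)
    (hsc : ∀ w w', F w - F w' ≥ ⟪G w', w - w'⟫ + μ / 2 * ‖w - w'‖ ^ 2) :
    ¬ Bornology.IsBounded (Set.range G) := by
  intro hG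
  have hanti : AntilipschitzWith (Real.toNNReal μ⁻¹) G := by
    refine AntilipschitzWith.of_le_mul_dist fun w w' => ?_
    rw [dist_eq_norm, dist_eq_norm, Real.coe_toNNReal _ (inv_pos.2 hμ).le, ← div_eq_inv_mul,
      le_div_iff₀' hμ]
    exact mul_norm_sub_le_norm_sub_of_strongConvex hsc w w'
  exact NormedSpace.unbounded_univ ℝ E (by simpa using hanti.isBounded_preimage hG)

end StronglyConvex

theorem no_bounded_gradient_strongly_convex_general {d : ℕ} (hd : 0 < d)
    {Ω : Type*} [MeasurableSpace Ω] (P : Measure Ω) [IsProbabilityMeasure P]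
    (F : EuclideanSpace ℝ (Fin d) → ℝ)
    (G : EuclideanSpace ℝ (Fin d) → EuclideanSpace ℝ (Fin d))
    (g : EuclideanSpace ℝ (Fin d) → Ω → EuclideanSpace ℝ (Fin d))
    (μ σ : ℝ) (hμ : 0 < μ)
    (hsc : ∀ w w', F w - F w' ≥ ⟪G w', w - w'⟫ + μ / 2 * ‖w - w'‖ ^ 2)
    (hmem : ∀ w, MemLp (g w) 2 P)
    (hexp : ∀ w, ∫ ω, g w ω ∂P = G w)
    (hbdd : ∀ w, ∫ ω, ‖g w ω‖ ^ 2 ∂P ≤ σ ^ 2) :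
    False := by
  have : Nonempty (Fin d) := ⟨⟨0, hd⟩⟩
  have hG : ∀ w, ‖G w‖ ≤ |σ| := fun w => by
    have h := sq_le_sq.1 <| (hexp w ▸ sq_norm_integral_le_integral_sq_norm (hmem w)).trans (hbdd w)
    rwa [abs_norm] at h
  exact not_isBounded_range_of_strongConvex hμ hsc
    (isBounded_iff_forall_norm_le.2 ⟨|σ|, Set.forall_mem_range.2 hG⟩)

theorem no_bounded_gradient_strongly_convex {d : ℕ} (hd : 0 < d)
    {Ω : Type*} [MeasurableSpace Ω] (P : Measure Ω) [IsProbabilityMeasure P]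
    (F : EuclideanSpace ℝ (Fin d) → ℝ)
    (G : EuclideanSpace ℝ (Fin d) → EuclideanSpace ℝ (Fin d))
    (g : EuclideanSpace ℝ (Fin d) → Ω → EuclideanSpace ℝ (Fin d))
    (μ σ : ℝ) (hμ : 0 < μ)
    (hgrad : ∀ w, HasGradientAt F (G w) w)
    (hsc : ∀ w w', F w - F w' ≥ ⟪G w', w - w'⟫ + μ / 2 * ‖w - w'‖ ^ 2)
    (wstar : EuclideanSpace ℝ (Fin d)) (hmin : ∀ w, F wstar ≤ F w)
    (hmem : ∀ w, MemLp (g w) 2 P)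
    (hexp : ∀ w, ∫ ω, g w ω ∂P = G w)
    (hbdd : ∀ w, ∫ ω, ‖g w ω‖ ^ 2 ∂P ≤ σ ^ 2) :
    False :=
  no_bounded_gradient_strongly_convex_general hd P F G g μ σ hμ hsc hmem hexp hbdd
end
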